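/- arXiv:1203.1854 — 3 statements merged into one kernel-verified Lean document; each statement's English description precedes it below -/
import Mathlib

section
/- Let γ = (v_0, v_1, …, v_{ℓ−1}, v_ℓ = v_0) be a simple cycle of length ℓ in a Tanner graph G, and let h ∈ ℕ₊ be such that ℓ does not divide h. For 0 ≤ i ≤ ℓ−1 let ψ_i = (v_i, v_{(i+1) mod ℓ}, …, v_{(i+h) mod ℓ}) be the length-h segment of γ starting at v_i. Then every vertex of γ has total multiplicity exactly h+1 over the paths ψ_0, …, ψ_{ℓ−1}, and consequently χ_G(γ) = Σ_{i=0}^{ℓ−1} (1/(h+1)) χ_G(ψ_i). -/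
open Finset

/-- A Tanner graph: a bipartite graph between a finite set `V` of variable nodes and a
finite set `J` of local-code nodes, given by its bipartite adjacency relation. -/
structure Tanner (V J : Type) where
  adj : V → J → Bool

namespace Tanner

variable {V J : Type} [Fintype V] [Fintype J] [DecidableEq V] [DecidableEq J]

/-- The vertex set of a Tanner graph. -/
abbrev Vert (V J : Type) := V ⊕ J

/-- Adjacency (as a `Bool`) between vertices of a Tanner graph. -/
def adjB (G : Tanner V J) : Vert V J → Vert V J → Bool
  | Sum.inl v, Sum.inr c => G.adj v c
  | Sum.inr c, Sum.inl v => G.adj v c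
  | _, _ => false

/-- Adjacency between vertices of a Tanner graph. -/
def Adj (G : Tanner V J) (w u : Vert V J) : Prop := G.adjB w u = true

/-- Degree of a variable node. -/
def degV (G : Tanner V J) (v : V) : ℕ := (univ.filter fun c => G.adj v c).card

/-- Degree of a local-code node. -/
def degC (G : Tanner V J) (c : J) : ℕ := (univ.filter fun v => G.adj v c).card

/-- A path of length `h`: a sequence of `h + 1` vertices in which every two consecutive
vertices are adjacent. -/
def IsPath (G : Tanner V J) (h : ℕ) (p : List (Vert V J)) : Prop :=
  p.length = h + 1 ∧ p.Chain' G.Adj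

/-- A path is backtrackless if it has no three consecutive vertices of the form
`(u, v, u)`. -/
def Backtrackless (p : List (Vert V J)) : Prop :=
  ∀ i, ∀ hi : i + 2 < p.length, p.get ⟨i, by omega⟩ ≠ p.get ⟨i + 2, hi⟩

/-- A simple cycle: a closed path whose only repeated vertex is the first vertex,
which equals the last vertex. -/
def IsSimpleCycle (G : Tanner V J) (p : List (Vert V J)) : Prop :=
  4 ≤ p.length ∧ p.Chain' G.Adj ∧ p.head? = p.getLast? ∧ p.dropLast.Nodup

/-- The multiplicity of a vertex in a path; for a closed path, the common first/last
vertex is counted once. -/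
def mult (p : List (Vert V J)) (w : Vert V J) : ℕ :=
  if 2 ≤ p.length ∧ p.head? = p.getLast? then p.dropLast.count w else p.count w

/-- The normalized characteristic vector of a path: the multiplicity of each variable
node in the path divided by its degree. -/
noncomputable def chi (G : Tanner V J) (p : List (Vert V J)) : V → ℝ :=
  fun v => (mult p (Sum.inl v) : ℝ) / (G.degV v : ℝ)

/-- The deviation set `B^{(h)}`: normalized characteristic vectors of backtrackless
paths of length `h`, scaled by `1 / (h + 1)`. -/
def Bset (G : Tanner V J) (h : ℕ) : Set (V → ℝ) :=
  { β | ∃ p : List (Vert V J), G.IsPath h p ∧ Backtrackless p ∧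
      β = fun v => G.chi p v / (h + 1) }

end Tanner

section Words

variable {V : Type} [Fintype V]

/-- The standard inner product on `ℝ^V`. -/
noncomputable def inner' (x y : V → ℝ) : ℝ := ∑ v, x v * y v

/-- A 0-1 word viewed as a real vector. -/
noncomputable def toR (x : V → Bool) : V → ℝ := fun v => if x v then 1 else 0

/-- The relative point `x ⊕ f`, defined coordinatewise by `|x_i - f_i|`. -/
noncomputable def relPt (x : V → Bool) (f : V → ℝ) : V → ℝ := fun v => |toR x v - f v|

/-- The coordinatewise product `(-1)^x ⋆ λ`. -/
noncomputable def flip' (x : V → Bool) (lam : V → ℝ) : V → ℝ :=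
  fun v => (if x v then -1 else 1) * lam v

end Words

/-- Local optimality: a codeword `x` is `h`-locally optimal with respect to `λ` if
`⟨λ, x ⊕ β⟩ > ⟨λ, x⟩` for every deviation `β ∈ B^{(h)}`. -/
def IsLocOpt {V J : Type} [Fintype V] [Fintype J] [DecidableEq V] [DecidableEq J]
    (G : Tanner V J) (h : ℕ) (x : V → Bool) (lam : V → ℝ) : Prop :=
  ∀ β ∈ G.Bset h, inner' lam (relPt x β) > inner' lam (toR x)

/-- A Tanner code: a Tanner graph together with a local code at every local-code node.
A local code is represented as the set of all assignments to the variable nodes whose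
restriction to the neighborhood of the local-code node is a local codeword; accordingly,
its membership predicate depends only on the values at the neighbors. -/
structure TannerCode (V J : Type) extends Tanner V J where
  localCode : J → Set (V → Bool)
  localCode_local : ∀ (j : J) (x y : V → Bool),
    (∀ v, adj v j = true → x v = y v) → x ∈ localCode j → y ∈ localCode j

namespace TannerCode

variable {V J : Type} [Fintype V] [Fintype J] [DecidableEq V] [DecidableEq J]

/-- The Tanner code: all words whose restriction to the neighborhood of every
local-code node is a local codeword. -/
def code (T : TannerCode V J) : Set (V → Bool) := { x | ∀ j, x ∈ T.localCode j }

/-- An even Tanner code: every variable node has even degree and every local codeword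
has even Hamming weight (on the neighborhood of its local-code node). -/
def IsEven (T : TannerCode V J) : Prop :=
  (∀ v, Even (T.toTanner.degV v)) ∧
  ∀ j, ∀ x ∈ T.localCode j,
    Even ((univ.filter fun v => T.adj v j = true ∧ x v = true).card)

/-- Linearity of the local codes: each local code contains the all-zero word and is
closed under mod-2 sums. -/
def IsLinear (T : TannerCode V J) : Prop :=
  (∀ j, (fun _ => false) ∈ T.localCode j) ∧
  ∀ j, ∀ x ∈ T.localCode j, ∀ y ∈ T.localCode j, (fun v => xor (x v) (y v)) ∈ T.localCode j

/-- The generalized fundamental polytope: the intersection of the convex hulls of the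
extended local codes. -/
noncomputable def polytope (T : TannerCode V J) : Set (V → ℝ) :=
  ⋂ j, convexHull ℝ (toR '' T.localCode j)

end TannerCode

/-! Since `ℓ ∤ h`, every window `ψ_i` has distinct endpoints, so its multiplicity function is
a plain count over the offsets `j ≤ h`. Exchanging the sums over `i` and `j`, each offset
contributes a sum of the `ℓ`-periodic sequence over a full period, which does not depend on the
offset and equals the multiplicity along `γ`. Hence every vertex is covered `(h + 1)` times as
often by the windows as by `γ`, and injectivity on one period makes the latter count `1`. -/

theorem Function.Periodic.sum_range_comp_add {M : Type*} [AddCommMonoid M] {f : ℕ → M} {ℓ : ℕ}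
    (hf : Function.Periodic f ℓ) (j : ℕ) :
    ∑ i ∈ Finset.range ℓ, f (i + j) = ∑ i ∈ Finset.range ℓ, f i := by
  induction j with
  | zero => rfl
  | succ j ih =>
    rw [← ih]
    obtain _ | m := ℓ
    · rfl
    · have hwrap : f (m + (j + 1)) = f (0 + j) := by
        rw [zero_add, ← hf j]; ring_nf
      rw [Finset.sum_range_succ, Finset.sum_range_succ', hwrap]
      simp only [add_right_comm _ 1 j, add_assoc]

theorem Function.Periodic.modEq_of_injOn {α : Type*} {f : ℕ → α} {ℓ : ℕ}
    (hf : Function.Periodic f ℓ) (hℓ : 0 < ℓ) (hinj : Set.InjOn f (Set.Iio ℓ))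
    {a b : ℕ} (hab : f a = f b) : a ≡ b [MOD ℓ] :=
  hinj (Nat.mod_lt a hℓ) (Nat.mod_lt b hℓ) (by rwa [hf.map_mod_nat, hf.map_mod_nat])

theorem Function.Periodic.apply_ne_apply_add_of_injOn {α : Type*} {f : ℕ → α} {ℓ h : ℕ}
    (hf : Function.Periodic f ℓ) (hℓ : 0 < ℓ) (hinj : Set.InjOn f (Set.Iio ℓ))
    (hh : ¬ ℓ ∣ h) (i : ℕ) : f i ≠ f (i + h) := fun hi =>
  hh <| Nat.modEq_zero_iff_dvd.1 <|
    (Nat.ModEq.add_left_cancel' i (by simpa using hf.modEq_of_injOn hℓ hinj hi)).symm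

-- `List.count` on `Tanner.Vert V J = V ⊕ J` uses `Sum.instBEq`, which the library does not
-- declare lawful.
instance Sum.instLawfulBEq {α β : Type*} [BEq α] [LawfulBEq α] [BEq β] [LawfulBEq β] :
    LawfulBEq (α ⊕ β) where
  eq_of_beq {a b} h := by cases a <;> cases b <;> simp_all [BEq.beq, Sum.instBEq.beq]
  rfl {a} := by cases a <;> simp [BEq.beq, Sum.instBEq.beq]

theorem List.count_map_range {α : Type*} [BEq α] [LawfulBEq α] [DecidableEq α]
    (f : ℕ → α) (n : ℕ) (a : α) :
    ((List.range n).map f).count a = ∑ j ∈ Finset.range n, if f j = a then 1 else 0 := by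
  induction n with
  | zero => rfl
  | succ n ih =>
    rw [List.range_succ, List.map_append, List.count_append, ih, Finset.sum_range_succ]
    simp [List.count_singleton]

namespace Tanner

variable {V J : Type} [DecidableEq V] [DecidableEq J]

theorem mult_map_range_of_ne {f : ℕ → Vert V J} {n : ℕ} (hne : f 0 ≠ f n) (w : Vert V J) :
    mult ((List.range (n + 1)).map f) w = ∑ j ∈ Finset.range (n + 1), if f j = w then 1 else 0 := by
  rw [mult, if_neg, List.count_map_range]
  rintro ⟨-, hclosed⟩
  exact hne (by simpa [List.head?_range, List.getLast?_range] using hclosed)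

theorem mult_map_range_of_eq {f : ℕ → Vert V J} {n : ℕ} (hn : 0 < n) (hclosed : f n = f 0)
    (w : Vert V J) :
    mult ((List.range (n + 1)).map f) w = ∑ j ∈ Finset.range n, if f j = w then 1 else 0 := by
  rw [mult, if_pos, List.range_succ, List.map_append, List.map_singleton, List.dropLast_concat,
    List.count_map_range]
  simp [List.head?_range, List.getLast?_range, hclosed]
  omega

theorem sum_mult_segments {v : ℕ → Vert V J} {ℓ h : ℕ} (hℓ : 0 < ℓ)
    (hper : Function.Periodic v ℓ) (hopen : ∀ i, v i ≠ v (i + h)) (w : Vert V J) :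
    ∑ i ∈ Finset.range ℓ, mult ((List.range (h + 1)).map fun j => v (i + j)) w
      = (h + 1) * mult ((List.range (ℓ + 1)).map v) w := by
  have hclosed : v ℓ = v 0 := by simpa using hper 0
  rw [Finset.sum_congr rfl fun i _ => mult_map_range_of_ne (by simpa using hopen i) w,
    mult_map_range_of_eq hℓ hclosed, Finset.sum_comm]
  have hrot : ∀ j, (∑ i ∈ Finset.range ℓ, if v (i + j) = w then 1 else 0)
      = ∑ i ∈ Finset.range ℓ, if v i = w then 1 else 0 :=
    (hper.comp fun x => if x = w then 1 else 0).sum_range_comp_add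
  simp only [hrot, Finset.sum_const, Finset.card_range, smul_eq_mul]

theorem mult_map_range_apply_of_injOn {v : ℕ → Vert V J} {ℓ k : ℕ} (hclosed : v ℓ = v 0)
    (hinj : Set.InjOn v (Set.Iio ℓ)) (hk : k < ℓ) :
    mult ((List.range (ℓ + 1)).map v) (v k) = 1 := by
  rw [mult_map_range_of_eq (by omega) hclosed]
  have hfiber : ∀ i ∈ Finset.range ℓ, v i = v k ↔ i = k := fun i hi =>
    ⟨fun hik => hinj (Finset.mem_range.1 hi) hk hik, congrArg v⟩
  rw [Finset.sum_congr rfl fun i hi => if_congr (hfiber i hi) rfl rfl, Finset.sum_ite_eq']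
  simp [hk]

end Tanner

theorem stmt6_general {V J : Type} [Fintype J] [DecidableEq V] [DecidableEq J]
    (G : Tanner V J) (ℓ : ℕ) (hℓ : 0 < ℓ) (v : ℕ → Tanner.Vert V J)
    (hper : ∀ i, v (i + ℓ) = v i)
    (hinj : ∀ i < ℓ, ∀ j < ℓ, v i = v j → i = j)
    (h : ℕ) (hnd : ¬ ℓ ∣ h) :
    (∀ k < ℓ, ∑ i ∈ Finset.range ℓ,
        Tanner.mult ((List.range (h + 1)).map fun j => v (i + j)) (v k) = h + 1) ∧
    ∀ u : V, G.chi ((List.range (ℓ + 1)).map v) u =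
      ∑ i ∈ Finset.range ℓ,
        (1 / (h + 1 : ℝ)) * G.chi ((List.range (h + 1)).map fun j => v (i + j)) u := by
  have hsum := Tanner.sum_mult_segments hℓ hper
    (Function.Periodic.apply_ne_apply_add_of_injOn hper hℓ hinj hnd)
  have hclosed : v ℓ = v 0 := by simpa using hper 0
  refine ⟨fun k hk => by rw [hsum, Tanner.mult_map_range_apply_of_injOn hclosed hinj hk, mul_one],
    fun u => ?_⟩
  simp only [Tanner.chi, ← Finset.mul_sum, ← Finset.sum_div, ← Nat.cast_sum, hsum]
  push_cast
  field_simp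

/-- Let `γ = (v_0, …, v_ℓ = v_0)` be a simple cycle of length `ℓ` in a
Tanner graph `G` (encoded by an `ℓ`-periodic vertex sequence `v` that is injective on
`[0, ℓ)` with consecutive vertices adjacent), and let `h ∈ ℕ₊` be such that `ℓ ∤ h`.
For `0 ≤ i ≤ ℓ−1` let `ψ_i = (v_i, …, v_{i+h})` be the length-`h` segment of `γ`
starting at `v_i`. Then every vertex of `γ` has total multiplicity exactly `h+1` over
`ψ_0, …, ψ_{ℓ−1}`, and `χ_G(γ) = Σ_{i<ℓ} (1/(h+1)) χ_G(ψ_i)`. -/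
theorem stmt6 {V J : Type} [Fintype V] [Fintype J] [DecidableEq V] [DecidableEq J]
    (G : Tanner V J) (ℓ : ℕ) (hℓ : 0 < ℓ) (v : ℕ → Tanner.Vert V J)
    (hper : ∀ i, v (i + ℓ) = v i)
    (hinj : ∀ i < ℓ, ∀ j < ℓ, v i = v j → i = j)
    (hadj : ∀ i, G.Adj (v i) (v (i + 1)))
    (h : ℕ) (hh : 0 < h) (hnd : ¬ ℓ ∣ h) :
    (∀ k < ℓ, ∑ i ∈ Finset.range ℓ,
        Tanner.mult ((List.range (h + 1)).map fun j => v (i + j)) (v k) = h + 1) ∧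
    ∀ u : V, G.chi ((List.range (ℓ + 1)).map v) u =
      ∑ i ∈ Finset.range ℓ,
        (1 / (h + 1 : ℝ)) * G.chi ((List.range (h + 1)).map fun j => v (i + j)) u :=
  stmt6_general G ℓ hℓ v hper hinj h hnd
end

section
/- Let S be a finite nonempty set of variable nodes of a Tanner graph G in which every variable node v satisfies d_L^min ≤ deg_G(v) ≤ d_L^max, and let λ ∈ {−1, +1}^𝒱. If Σ_{v∈S} λ_v / deg_G(v) ≤ 0, then the number of v ∈ S with λ_v = −1 is at least |S| · d_L^min / (d_L^min + d_L^max). In particular, if a simple path ψ in G with variable-node set S has normalized cost ⟨λ, χ_G(ψ)⟩ ≤ 0, then at least a fraction d_L^min / (d_L^min + d_L^max) of the variable nodes on ψ carry the value −1. -/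
open Finset

/-!
Split `S` into the nodes with `λ_v = +1` and those with `λ_v = -1`. The cost condition says that
the inverse degrees summed over the positive nodes are at most those summed over the negative
ones. Every inverse degree lies between `1 / d_L^max` and `1 / d_L^min`, so
`#positive / d_L^max ≤ #negative / d_L^min`; since the two classes partition `S`, this is the
claimed bound on the negative ones.
-/

theorem Finset.sum_div_eq_sum_inv_sub_sum_inv {ι : Type*} (S : Finset ι) (s d : ι → ℝ)
    (hs : ∀ i, s i = 1 ∨ s i = -1) :
    ∑ i ∈ S, s i / d i =
      ∑ i ∈ S.filter (fun i => s i ≠ -1), (d i)⁻¹ - ∑ i ∈ S.filter (fun i => s i = -1), (d i)⁻¹ := by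
  rw [← S.sum_filter_add_sum_filter_not (fun i => s i = -1), sub_eq_neg_add, ← sum_neg_distrib]
  congr 1
  · refine sum_congr rfl fun i hi => ?_
    rw [(mem_filter.mp hi).2, neg_div, one_div]
  · refine sum_congr rfl fun i hi => ?_
    rw [(hs i).resolve_right (mem_filter.mp hi).2, one_div]

theorem Finset.card_mul_le_card_mul_of_sum_inv_le {ι : Type*} {P N : Finset ι} {d : ι → ℝ}
    {a b : ℝ} (ha : 0 ≤ a) (hb : 0 ≤ b) (hP : ∀ i ∈ P, 0 < d i ∧ d i ≤ b)
    (hN : ∀ i ∈ N, a ≤ d i) (h : ∑ i ∈ P, (d i)⁻¹ ≤ ∑ i ∈ N, (d i)⁻¹) :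
    #P * a ≤ #N * b := by
  calc (#P : ℝ) * a = ∑ i ∈ P, a := by rw [sum_const, nsmul_eq_mul]
    _ ≤ ∑ i ∈ P, a * b * (d i)⁻¹ := sum_le_sum fun i hi => by
        obtain ⟨hd, hdb⟩ := hP i hi
        rw [mul_assoc, ← div_eq_mul_inv]
        exact le_mul_of_one_le_right ha ((one_le_div hd).mpr hdb)
    _ = a * b * ∑ i ∈ P, (d i)⁻¹ := (mul_sum ..).symm
    _ ≤ a * b * ∑ i ∈ N, (d i)⁻¹ := mul_le_mul_of_nonneg_left h (mul_nonneg ha hb)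
    _ = ∑ i ∈ N, b * (a / d i) := by rw [mul_sum]; exact sum_congr rfl fun i _ => by ring
    _ ≤ ∑ i ∈ N, b := sum_le_sum fun i hi =>
        mul_le_of_le_one_right hb (div_le_one_of_le₀ (hN i hi) (ha.trans (hN i hi)))
    _ = #N * b := by rw [sum_const, nsmul_eq_mul]

theorem stmt14_general {V J : Type} [Fintype J]
    (G : Tanner V J) (dLmin dLmax : ℕ)
    (hdeg : ∀ v : V, dLmin ≤ G.degV v ∧ G.degV v ≤ dLmax)
    (lam : V → ℝ) (hlam : ∀ v, lam v = 1 ∨ lam v = -1)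
    (S : Finset V)
    (hcost : ∑ v ∈ S, lam v / (G.degV v : ℝ) ≤ 0) :
    (S.card : ℝ) * dLmin / (dLmin + dLmax) ≤
      ((S.filter fun v => lam v = -1).card : ℝ) := by
  rcases Nat.eq_zero_or_pos dLmin with hzero | hpos
  · simp [hzero]
  have hkey : (#(S.filter fun v => lam v ≠ -1) : ℝ) * dLmin ≤
      #(S.filter fun v => lam v = -1) * dLmax := by
    refine card_mul_le_card_mul_of_sum_inv_le (d := fun v => (G.degV v : ℝ)) (by positivity)
      (by positivity) (fun v _ => ⟨?_, ?_⟩) (fun v _ => ?_) ?_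
    · exact_mod_cast hpos.trans_le (hdeg v).1
    · exact_mod_cast (hdeg v).2
    · exact_mod_cast (hdeg v).1
    · linarith [S.sum_div_eq_sum_inv_sub_sum_inv lam (fun v => (G.degV v : ℝ)) hlam]
  have hcard := S.card_filter_add_card_filter_not (fun v => lam v = -1)
  rw [div_le_iff₀ (by positivity), ← hcard, add_comm]
  push_cast
  linarith

/-- Let `S` be a finite nonempty set of variable nodes of a Tanner graph
in which every variable node `v` satisfies `d_L^min ≤ deg_G(v) ≤ d_L^max`, and let
`λ ∈ {−1, +1}^𝒱`. If `Σ_{v∈S} λ_v / deg_G(v) ≤ 0`, then the number of `v ∈ S` with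
`λ_v = −1` is at least `|S| · d_L^min / (d_L^min + d_L^max)`. -/
theorem stmt14 {V J : Type} [Fintype V] [Fintype J] [DecidableEq V] [DecidableEq J]
    (G : Tanner V J) (dLmin dLmax : ℕ)
    (hdeg : ∀ v : V, dLmin ≤ G.degV v ∧ G.degV v ≤ dLmax)
    (lam : V → ℝ) (hlam : ∀ v, lam v = 1 ∨ lam v = -1)
    (S : Finset V) (hS : S.Nonempty)
    (hcost : ∑ v ∈ S, lam v / (G.degV v : ℝ) ≤ 0) :
    (S.card : ℝ) * dLmin / (dLmin + dLmax) ≤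
      ((S.filter fun v => lam v = -1).card : ℝ) :=
  stmt14_general G dLmin dLmax hdeg lam hlam S hcost
end

section
/- Let G be a Tanner graph in which every variable node v satisfies d_L^min ≤ deg_G(v) ≤ d_L^max, set δ = d_L^min / (d_L^min + d_L^max), and let p ∈ [0,1]. Let (λ_v)_{v∈𝒱} be independent random variables with Pr(λ_v = −1) = p and Pr(λ_v = +1) = 1 − p. Then for every simple path ψ in G containing exactly m distinct variable nodes, Pr{⟨λ, χ_G(ψ)⟩ ≤ 0} ≤ 2^m · p^{δm}. -/
open Finset

theorem List.Nodup.head?_ne_getLast? {α : Type*} {l : List α} (hl : l.Nodup)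
    (hlen : 2 ≤ l.length) : l.head? ≠ l.getLast? := by
  have h0 : 0 < l.length := by omega
  have h1 : l.length - 1 < l.length := by omega
  rw [List.head?_eq_getElem?, List.getLast?_eq_getElem?, List.getElem?_eq_getElem h0,
    List.getElem?_eq_getElem h1, Ne, Option.some_inj, hl.getElem_inj_iff]
  omega

namespace Tanner

variable {V J : Type} [DecidableEq V] [DecidableEq J]

def varNodes [Fintype V] (p : List (Vert V J)) : Finset V :=
  univ.filter fun v => p.contains (Sum.inl v)

theorem mult_of_nodup {p : List (Vert V J)} (hp : p.Nodup) (w : Vert V J) :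
    mult p w = p.count w :=
  if_neg fun h => hp.head?_ne_getLast? h.1 h.2

theorem chi_of_nodup [Fintype J] (G : Tanner V J) {p : List (Vert V J)} (hp : p.Nodup)
    (v : V) : G.chi p v = if Sum.inl v ∈ p then (G.degV v : ℝ)⁻¹ else 0 := by
  rw [chi, mult_of_nodup hp]
  split_ifs with hv
  · rw [List.count_eq_one_of_mem hp hv, Nat.cast_one, one_div]
  · rw [List.count_eq_zero_of_not_mem hv, Nat.cast_zero, zero_div]

theorem inner'_chi_of_nodup [Fintype V] [Fintype J] (G : Tanner V J) {p : List (Vert V J)}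
    (hp : p.Nodup) (x : V → ℝ) :
    inner' x (G.chi p) = ∑ v ∈ varNodes p, x v / G.degV v := by
  simp only [inner', varNodes, Finset.sum_filter, List.contains_iff_mem, G.chi_of_nodup hp,
    mul_ite, mul_zero, div_eq_mul_inv]

end Tanner

-- Scaling by `a * b` avoids dividing by `a`; when `d = 0` (so `a = 0`), `x / d = 0` in Lean.
theorem ite_neg_one_le_mul_div {a b d x : ℝ} (ha : 0 ≤ a) (hb : 0 ≤ b) (had : a ≤ d)
    (hdb : d ≤ b) (hx : x = -1 ∨ x = 1) : (if x = -1 then -b else a) ≤ a * b * (x / d) := by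
  rcases (ha.trans had).eq_or_lt with hd | hd
  · obtain rfl : a = 0 := le_antisymm (hd ▸ had) ha
    rcases hx with rfl | rfl <;> norm_num [hb]
  · rcases hx with rfl | rfl
    · rw [if_pos rfl, neg_div, mul_neg, neg_le_neg_iff, mul_comm a, mul_one_div, mul_div_assoc]
      exact mul_le_of_le_one_right hb ((div_le_one hd).2 had)
    · rw [if_neg (by norm_num), mul_one_div, mul_div_assoc]
      exact le_mul_of_one_le_right ha ((one_le_div hd).2 hdb)

theorem div_add_mul_card_le_card_filter_of_sum_div_nonpos {ι : Type*} (S : Finset ι)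
    {a b : ℝ} (ha : 0 ≤ a) (hb : 0 ≤ b) (d x : ι → ℝ) (hd : ∀ i ∈ S, a ≤ d i ∧ d i ≤ b)
    (hx : ∀ i ∈ S, x i = -1 ∨ x i = 1) (hsum : ∑ i ∈ S, x i / d i ≤ 0) :
    a / (a + b) * #S ≤ #{i ∈ S | x i = -1} := by
  have hcount : -b * #{i ∈ S | x i = -1} + a * #{i ∈ S | ¬x i = -1}
      ≤ a * b * ∑ i ∈ S, x i / d i := calc
    _ = ∑ i ∈ S, if x i = -1 then -b else a := by
      rw [Finset.sum_ite, Finset.sum_const, Finset.sum_const, nsmul_eq_mul, nsmul_eq_mul]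
      ring
    _ ≤ ∑ i ∈ S, a * b * (x i / d i) := Finset.sum_le_sum fun i hi =>
      ite_neg_one_le_mul_div ha hb (hd i hi).1 (hd i hi).2 (hx i hi)
    _ = a * b * ∑ i ∈ S, x i / d i := (Finset.mul_sum ..).symm
  have hsplit := Finset.card_filter_add_card_filter_not (s := S) (fun i => x i = -1)
  have hab : a * b * ∑ i ∈ S, x i / d i ≤ 0 := mul_nonpos_of_nonneg_of_nonpos (by positivity) hsum
  rcases (add_nonneg ha hb).eq_or_lt with hab0 | hab0
  · rw [← hab0, div_zero, zero_mul]
    positivity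
  · rw [div_mul_eq_mul_div, div_le_iff₀ hab0, ← hsplit]
    push_cast
    nlinarith

section Probability

open MeasureTheory ProbabilityTheory

variable {Ω : Type*} [MeasurableSpace Ω] {μ : Measure Ω} {p : ℝ}

theorem ae_eq_neg_one_or_eq_one [IsProbabilityMeasure μ] {X : Ω → ℝ} (hX : Measurable X)
    (hp0 : 0 ≤ p) (hp1 : p ≤ 1) (hneg : μ {ω | X ω = -1} = ENNReal.ofReal p)
    (hpos : μ {ω | X ω = 1} = ENNReal.ofReal (1 - p)) :
    ∀ᵐ ω ∂μ, X ω = -1 ∨ X ω = 1 := by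
  have hmeas : MeasurableSet {ω | X ω = -1 ∨ X ω = 1} :=
    (hX (measurableSet_singleton _)).union (hX (measurableSet_singleton _))
  have hdisj : Disjoint {ω | X ω = -1} {ω | X ω = 1} :=
    Set.disjoint_left.2 fun ω (h1 : X ω = -1) (h2 : X ω = 1) => by linarith
  refine ae_iff.2 ((prob_compl_eq_zero_iff hmeas).2 ?_)
  rw [Set.ofPred_or, measure_union hdisj (hX (measurableSet_singleton _)), hneg, hpos,
    ← ENNReal.ofReal_add hp0 (sub_nonneg.2 hp1), add_sub_cancel, ENNReal.ofReal_one]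

theorem measure_le_card_filter_eq_neg_one_le {ι : Type*} {X : ι → Ω → ℝ}
    (hind : iIndepFun X μ) (hp0 : 0 ≤ p) (hp1 : p ≤ 1)
    (hneg : ∀ i, μ {ω | X i ω = -1} = ENNReal.ofReal p) (S : Finset ι) {r : ℝ} (hr : 0 ≤ r) :
    μ {ω | r ≤ #{i ∈ S | X i ω = -1}} ≤ ENNReal.ofReal (2 ^ #S * p ^ r) := by
  classical
  set F := S.powerset.filter fun T => r ≤ #T
  have hcover : {ω | r ≤ #{i ∈ S | X i ω = -1}} ⊆ ⋃ T ∈ F, ⋂ i ∈ T, {ω | X i ω = -1} := by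
    intro ω hω
    simp only [Set.mem_iUnion, Set.mem_iInter]
    exact ⟨_, Finset.mem_filter.2 ⟨Finset.mem_powerset.2 (Finset.filter_subset _ _), hω⟩,
      fun i hi => (Finset.mem_filter.1 hi).2⟩
  have hpattern : ∀ T ∈ F, μ (⋂ i ∈ T, {ω | X i ω = -1}) ≤ ENNReal.ofReal (p ^ r) := by
    intro T hT
    rw [hind.meas_biInter (s := fun i => {ω | X i ω = -1})
        fun i _ => ⟨{-1}, measurableSet_singleton _, rfl⟩,
      Finset.prod_congr rfl fun i _ => hneg i, Finset.prod_const, ← ENNReal.ofReal_pow hp0,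
      ← Real.rpow_natCast]
    exact ENNReal.ofReal_le_ofReal
      (Real.rpow_le_rpow_of_exponent_ge' hp0 hp1 hr (Finset.mem_filter.1 hT).2)
  have hFcard : (#F : ENNReal) ≤ ENNReal.ofReal (2 ^ #S) := by
    rw [ENNReal.ofReal_pow zero_le_two, ENNReal.ofReal_ofNat, ← Nat.cast_ofNat, ← Nat.cast_pow,
      ← Finset.card_powerset]
    exact_mod_cast Finset.card_filter_le _ _
  calc μ {ω | r ≤ #{i ∈ S | X i ω = -1}}
      ≤ ∑ T ∈ F, μ (⋂ i ∈ T, {ω | X i ω = -1}) :=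
        (measure_mono hcover).trans (measure_biUnion_finset_le _ _)
    _ ≤ #F * ENNReal.ofReal (p ^ r) := by
        rw [← nsmul_eq_mul]
        exact Finset.sum_le_card_nsmul _ _ _ hpattern
    _ ≤ ENNReal.ofReal (2 ^ #S * p ^ r) := by
        rw [ENNReal.ofReal_mul (by positivity)]
        gcongr

end Probability

open MeasureTheory ProbabilityTheory in
theorem stmt15_general {V J Ω : Type} [Fintype V] [Fintype J] [DecidableEq V] [DecidableEq J]
    [MeasurableSpace Ω] (μ : Measure Ω) [IsProbabilityMeasure μ]
    (G : Tanner V J) (dLmin dLmax : ℕ)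
    (hdeg : ∀ v : V, dLmin ≤ G.degV v ∧ G.degV v ≤ dLmax)
    (p : ℝ) (hp0 : 0 ≤ p) (hp1 : p ≤ 1)
    (lam : V → Ω → ℝ) (hmeas : ∀ v, Measurable (lam v))
    (hind : iIndepFun lam μ)
    (hdist : ∀ v, μ { ω | lam v ω = -1 } = ENNReal.ofReal p ∧
      μ { ω | lam v ω = 1 } = ENNReal.ofReal (1 - p))
    (m : ℕ) (ψ : List (Tanner.Vert V J)) (hsimple : ψ.Nodup)
    (hm : (univ.filter fun v : V => ψ.contains (Sum.inl v)).card = m) :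
    μ { ω | inner' (fun v => lam v ω) (G.chi ψ) ≤ 0 } ≤
      ENNReal.ofReal (2 ^ m *
        p ^ (((dLmin : ℝ) / ((dLmin : ℝ) + (dLmax : ℝ))) * m)) := by
  subst hm
  have hsign : ∀ᵐ ω ∂μ, ∀ v, lam v ω = -1 ∨ lam v ω = 1 := ae_all_iff.2 fun v =>
    ae_eq_neg_one_or_eq_one (hmeas v) hp0 hp1 (hdist v).1 (hdist v).2
  refine (measure_mono_ae ?_).trans (measure_le_card_filter_eq_neg_one_le hind hp0 hp1
    (fun v => (hdist v).1) (Tanner.varNodes ψ) (by positivity))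
  filter_upwards [hsign] with ω hω (hle : inner' (fun v => lam v ω) (G.chi ψ) ≤ 0)
  rw [G.inner'_chi_of_nodup hsimple] at hle
  have hdeg' : ∀ v ∈ Tanner.varNodes ψ, (dLmin : ℝ) ≤ G.degV v ∧ (G.degV v : ℝ) ≤ dLmax :=
    fun v _ => ⟨by exact_mod_cast (hdeg v).1, by exact_mod_cast (hdeg v).2⟩
  exact div_add_mul_card_le_card_filter_of_sum_div_nonpos _ (Nat.cast_nonneg _)
    (Nat.cast_nonneg _) _ _ hdeg' (fun v _ => hω v) hle

open MeasureTheory ProbabilityTheory in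
/-- Let `G` be a Tanner graph with variable-node degrees between
`d_L^min` and `d_L^max`, set `δ = d_L^min/(d_L^min + d_L^max)`, and let `p ∈ [0,1]`.
Let `(λ_v)` be independent random variables with `Pr(λ_v = −1) = p` and
`Pr(λ_v = +1) = 1 − p`. Then for every simple path `ψ` in `G` containing exactly `m`
distinct variable nodes, `Pr{⟨λ, χ_G(ψ)⟩ ≤ 0} ≤ 2^m · p^{δm}`. -/
theorem stmt15 {V J Ω : Type} [Fintype V] [Fintype J] [DecidableEq V] [DecidableEq J]
    [MeasurableSpace Ω] (μ : Measure Ω) [IsProbabilityMeasure μ]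
    (G : Tanner V J) (dLmin dLmax : ℕ)
    (hdeg : ∀ v : V, dLmin ≤ G.degV v ∧ G.degV v ≤ dLmax)
    (p : ℝ) (hp0 : 0 ≤ p) (hp1 : p ≤ 1)
    (lam : V → Ω → ℝ) (hmeas : ∀ v, Measurable (lam v))
    (hind : iIndepFun lam μ)
    (hdist : ∀ v, μ { ω | lam v ω = -1 } = ENNReal.ofReal p ∧
      μ { ω | lam v ω = 1 } = ENNReal.ofReal (1 - p))
    (g m : ℕ) (ψ : List (Tanner.Vert V J)) (hψ : G.IsPath g ψ) (hsimple : ψ.Nodup)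
    (hm : (univ.filter fun v : V => ψ.contains (Sum.inl v)).card = m) :
    μ { ω | inner' (fun v => lam v ω) (G.chi ψ) ≤ 0 } ≤
      ENNReal.ofReal (2 ^ m *
        p ^ (((dLmin : ℝ) / ((dLmin : ℝ) + (dLmax : ℝ))) * m)) :=
  stmt15_general μ G dLmin dLmax hdeg p hp0 hp1 lam hmeas hind hdist m ψ hsimple hm
end
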